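/- arXiv:2508.17111 — 8 statements merged into one kernel-verified Lean document; each statement's English description precedes it below -/
import Mathlib

section
/- For every integer n ≥ 3, the function J̃ is strictly increasing and strictly concave on [0, v̄]; more precisely, for every v ∈ [0, v̄] its derivative equals J̃'(v) = (1/v̄) · Σ_{m=1}^{n−1} [(n−1)!/((n−1−m)!·(m−1)!)] · (ln(m+ω₀) − ln(m−1+ω₀)) · (v/v̄)^{m−1} · (1 − v/v̄)^{n−1−m}, which is strictly positive, and its second derivative satisfies J̃''(v) < 0. -/
open Real Finset

/-- The expected social-network benefit at threshold `v`, when each user's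
valuation is uniform on `[0, vbar]` among `n` users with intrinsic constant `ω₀`:
`J̃(v) = Σ_{m=0}^{n−1} C(n−1,m) · ln(m+ω₀) · (v/v̄)^m · (1 − v/v̄)^{n−1−m}`. -/
noncomputable def Jt (n : ℕ) (ω₀ vbar : ℝ) (v : ℝ) : ℝ :=
  ∑ m ∈ Finset.range n, (Nat.choose (n - 1) m : ℝ) * Real.log ((m : ℝ) + ω₀) *
    (v / vbar) ^ m * (1 - v / vbar) ^ (n - 1 - m)

/-! `J̃(v)` is the Bernstein polynomial of degree `n - 1` with coefficients `g m = log (m + ω₀)`,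
evaluated at `v / v̄`. Differentiating a Bernstein polynomial replaces its coefficients by their
forward differences, so `J̃'` and `J̃''` are (positive multiples of) Bernstein polynomials with
coefficients `Δg > 0` (log is increasing) and `Δ²g < 0` (log is strictly concave). The Bernstein
basis is a nonnegative partition of unity on `[0, 1]`, so these signs pass to the derivatives. -/

open Polynomial
open scoped Nat fwdDiff

noncomputable def bernsteinSum (R : Type*) [CommRing R] (k : ℕ) (g : ℕ → R) : R[X] :=
  ∑ m ∈ range (k + 1), C (g m) * bernsteinPolynomial R k m

section CommRing

variable {R : Type*} [CommRing R]

theorem bernsteinSum_eq_sum_range_add_two (k : ℕ) (g : ℕ → R) :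
    bernsteinSum R k g = ∑ m ∈ range (k + 2), C (g m) * bernsteinPolynomial R k m := by
  rw [sum_range_succ, bernsteinPolynomial.eq_zero_of_lt R k.lt_succ_self, mul_zero, add_zero,
    bernsteinSum]

theorem derivative_bernsteinSum_succ (k : ℕ) (g : ℕ → R) :
    derivative (bernsteinSum R (k + 1) g) = ((k + 1 : ℕ) : R[X]) * bernsteinSum R k (Δ_[1] g) := by
  have hshift := bernsteinSum_eq_sum_range_add_two k g
  rw [sum_range_succ'] at hshift
  rw [bernsteinSum, derivative_sum, sum_range_succ']
  simp only [derivative_C_mul, bernsteinPolynomial.derivative_succ_aux,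
    bernsteinPolynomial.derivative_zero]
  rw [bernsteinSum] at hshift
  simp only [bernsteinSum, fwdDiff, C_sub, sub_mul, sum_sub_distrib, mul_sub, ← mul_sum,
    mul_left_comm (C _), Nat.add_sub_cancel, Nat.cast_succ]
  linear_combination ((k : R[X]) + 1) * hshift

theorem bernsteinSum_neg (k : ℕ) (g : ℕ → R) : bernsteinSum R k (-g) = -bernsteinSum R k g := by
  simp [bernsteinSum, sum_neg_distrib]

end CommRing

theorem deriv_eval_div_const (p : ℝ[X]) (c : ℝ) :
    deriv (fun v => p.eval (v / c)) = fun v => (C c⁻¹ * derivative p).eval (v / c) := by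
  funext v
  have := (p.hasDerivAt (v / c)).comp v ((hasDerivAt_id v).div_const c)
  exact this.deriv.trans (by simp [mul_comm, div_eq_mul_inv])

theorem eval_bernsteinPolynomial_nonneg (k m : ℕ) {x : ℝ} (hx : x ∈ Set.Icc (0 : ℝ) 1) :
    0 ≤ (bernsteinPolynomial ℝ k m).eval x := by
  simp only [bernsteinPolynomial, eval_mul, eval_pow, eval_natCast, eval_X, eval_sub, eval_one]
  have := hx.2
  exact mul_nonneg (mul_nonneg (Nat.cast_nonneg _) (pow_nonneg hx.1 _)) (pow_nonneg (by linarith) _)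

theorem eval_bernsteinSum_pos {k : ℕ} {g : ℕ → ℝ} {x : ℝ} (hx : x ∈ Set.Icc (0 : ℝ) 1)
    (hg : ∀ m ≤ k, 0 < g m) : 0 < (bernsteinSum ℝ k g).eval x := by
  have hw : ∑ m ∈ range (k + 1), (bernsteinPolynomial ℝ k m).eval x = 1 := by
    simpa [eval_finsetSum] using congrArg (eval x) (bernsteinPolynomial.sum ℝ k)
  obtain ⟨i, hi, hwi⟩ : ∃ i ∈ range (k + 1), 0 < (bernsteinPolynomial ℝ k i).eval x :=
    exists_lt_of_sum_lt (by simp [hw])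
  simp only [bernsteinSum, eval_finsetSum, eval_mul, eval_C]
  exact sum_pos' (fun m hm => mul_nonneg (hg m (Nat.lt_succ_iff.mp (mem_range.mp hm))).le
    (eval_bernsteinPolynomial_nonneg k m hx))
    ⟨i, hi, mul_pos (hg i (Nat.lt_succ_iff.mp (mem_range.mp hi))) hwi⟩

theorem eval_bernsteinSum_neg {k : ℕ} {g : ℕ → ℝ} {x : ℝ} (hx : x ∈ Set.Icc (0 : ℝ) 1)
    (hg : ∀ m ≤ k, g m < 0) : (bernsteinSum ℝ k g).eval x < 0 := by
  have := eval_bernsteinSum_pos (g := -g) hx fun m hm => neg_pos.mpr (hg m hm)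
  rwa [bernsteinSum_neg, eval_neg, neg_pos] at this

theorem fwdDiff_log_add_pos {ω : ℝ} (hω : 0 < ω) (m : ℕ) :
    0 < Δ_[1] (fun m : ℕ => log (m + ω)) m := by
  simp only [fwdDiff, Nat.cast_succ, sub_pos]
  exact log_lt_log (by positivity) (by linarith)

theorem fwdDiff_fwdDiff_log_add_neg {ω : ℝ} (hω : 0 < ω) (m : ℕ) :
    Δ_[1] (Δ_[1] fun m : ℕ => log (m + ω)) m < 0 := by
  have ha : 0 < (m : ℝ) + ω := by positivity
  have hmid : log ((m + ω) * (m + 2 + ω)) < log ((m + 1 + ω) ^ 2) :=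
    log_lt_log (by positivity) (by nlinarith)
  rw [log_mul ha.ne' (by positivity), log_pow] at hmid
  simp only [fwdDiff]
  push_cast at hmid ⊢
  rw [show (m : ℝ) + 1 + 1 + ω = m + 2 + ω by ring]
  linarith

theorem Nat.factorial_succ_div_factorial_mul_factorial {k j : ℕ} (hj : j ≤ k) :
    (k + 1)! / ((k - j)! * j !) = (k + 1) * k.choose j := by
  refine Nat.div_eq_of_eq_mul_left (by positivity) ?_
  rw [Nat.factorial_succ, ← Nat.choose_mul_factorial_mul_factorial hj]
  ring

theorem natCast_mul_eval_bernsteinSum (k : ℕ) (g : ℕ → ℝ) (x : ℝ) :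
    ((k + 1 : ℕ) : ℝ) * (bernsteinSum ℝ k g).eval x =
      ∑ m ∈ Icc 1 (k + 1), (((k + 1)! / ((k + 1 - m)! * (m - 1)!) : ℕ) : ℝ) * g (m - 1) *
        x ^ (m - 1) * (1 - x) ^ (k + 1 - m) := by
  rw [← Ico_add_one_right_eq_Icc, sum_Ico_eq_sum_range, Nat.add_sub_cancel, bernsteinSum,
    eval_finsetSum, mul_sum]
  refine sum_congr rfl fun j hj => ?_
  have hjk : j ≤ k := Nat.lt_succ_iff.mp (mem_range.mp hj)
  rw [show k + 1 - (1 + j) = k - j by omega, Nat.add_sub_cancel_left,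
    Nat.factorial_succ_div_factorial_mul_factorial hjk]
  simp only [bernsteinPolynomial, eval_mul, eval_C, eval_pow, eval_natCast, eval_X, eval_sub,
    eval_one]
  push_cast
  ring

section Jt

variable {ω₀ vbar : ℝ}

theorem Jt_succ_eq_eval_bernsteinSum (k : ℕ) (ω₀ vbar : ℝ) :
    Jt (k + 1) ω₀ vbar = fun v => (bernsteinSum ℝ k fun m => log (m + ω₀)).eval (v / vbar) := by
  funext v
  simp only [Jt, bernsteinSum, bernsteinPolynomial, eval_finsetSum, eval_mul, eval_C, eval_pow,
    eval_natCast, eval_X, eval_sub, eval_one, Nat.add_sub_cancel]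
  exact sum_congr rfl fun m _ => by ring

theorem deriv_Jt_add_two (k : ℕ) : deriv (Jt (k + 2) ω₀ vbar) = fun v => vbar⁻¹ *
    (((k + 1 : ℕ) : ℝ) * (bernsteinSum ℝ k (Δ_[1] fun m : ℕ => log (m + ω₀))).eval (v / vbar)) := by
  rw [Jt_succ_eq_eval_bernsteinSum, deriv_eval_div_const, derivative_bernsteinSum_succ]
  simp only [eval_mul, eval_C, eval_natCast]

theorem deriv_deriv_Jt_add_three (k : ℕ) : deriv (deriv (Jt (k + 3) ω₀ vbar)) = fun v =>
    vbar⁻¹ ^ 2 * ((k + 2) * (k + 1)) *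
      (bernsteinSum ℝ k (Δ_[1] (Δ_[1] fun m : ℕ => log (m + ω₀)))).eval (v / vbar) := by
  rw [Jt_succ_eq_eval_bernsteinSum, deriv_eval_div_const, deriv_eval_div_const,
    derivative_bernsteinSum_succ, derivative_C_mul, derivative_natCast_mul,
    derivative_bernsteinSum_succ]
  funext v
  simp only [eval_mul, eval_C, eval_natCast]
  push_cast
  ring

theorem deriv_Jt_eq_sum {n : ℕ} (hn : 2 ≤ n) (v : ℝ) :
    deriv (Jt n ω₀ vbar) v = (1 / vbar) * ∑ m ∈ Icc 1 (n - 1),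
      (((n - 1)! / ((n - 1 - m)! * (m - 1)!) : ℕ) : ℝ) * (log (m + ω₀) - log (m - 1 + ω₀)) *
        (v / vbar) ^ (m - 1) * (1 - v / vbar) ^ (n - 1 - m) := by
  obtain ⟨k, rfl⟩ : ∃ k, n = k + 2 := ⟨n - 2, by omega⟩
  rw [deriv_Jt_add_two, show k + 2 - 1 = k + 1 from rfl]
  beta_reduce
  rw [natCast_mul_eval_bernsteinSum, one_div]
  refine congrArg _ (sum_congr rfl fun m hm => ?_)
  obtain ⟨j, rfl⟩ := Nat.exists_eq_add_of_le' (mem_Icc.mp hm).1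
  simp [fwdDiff]

theorem div_mem_Icc_zero_one {v : ℝ} (hv : 0 < vbar) (hv' : v ∈ Set.Icc 0 vbar) :
    v / vbar ∈ Set.Icc (0 : ℝ) 1 :=
  ⟨div_nonneg hv'.1 hv.le, div_le_one_of_le₀ hv'.2 hv.le⟩

theorem deriv_Jt_pos {n : ℕ} (hn : 2 ≤ n) (hω : 0 < ω₀) (hv : 0 < vbar) {v : ℝ}
    (hv' : v ∈ Set.Icc 0 vbar) : 0 < deriv (Jt n ω₀ vbar) v := by
  obtain ⟨k, rfl⟩ : ∃ k, n = k + 2 := ⟨n - 2, by omega⟩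
  have := eval_bernsteinSum_pos (k := k) (div_mem_Icc_zero_one hv hv') fun m _ =>
    fwdDiff_log_add_pos hω m
  rw [deriv_Jt_add_two]
  positivity

theorem deriv_deriv_Jt_neg {n : ℕ} (hn : 3 ≤ n) (hω : 0 < ω₀) (hv : 0 < vbar) {v : ℝ}
    (hv' : v ∈ Set.Icc 0 vbar) : deriv (deriv (Jt n ω₀ vbar)) v < 0 := by
  obtain ⟨k, rfl⟩ : ∃ k, n = k + 3 := ⟨n - 3, by omega⟩
  have := eval_bernsteinSum_neg (k := k) (div_mem_Icc_zero_one hv hv') fun m _ =>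
    fwdDiff_fwdDiff_log_add_neg hω m
  rw [deriv_deriv_Jt_add_three]
  exact mul_neg_of_pos_of_neg (by positivity) this

theorem continuous_Jt (n : ℕ) : Continuous (Jt n ω₀ vbar) := by
  unfold Jt
  fun_prop

end Jt

/-- For `n ≥ 3`, `J̃` is strictly increasing and strictly concave on `[0, v̄]`;
its derivative equals the displayed sum formula, which is strictly positive,
and its second derivative is strictly negative on `[0, v̄]`. -/
theorem stmt0 (n : ℕ) (hn : 3 ≤ n) (ω₀ vbar : ℝ) (hω : 1 < ω₀) (hv : 0 < vbar) :
    StrictMonoOn (Jt n ω₀ vbar) (Set.Icc 0 vbar) ∧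
    StrictConcaveOn ℝ (Set.Icc 0 vbar) (Jt n ω₀ vbar) ∧
    ∀ v ∈ Set.Icc (0 : ℝ) vbar,
      (deriv (Jt n ω₀ vbar) v =
        (1 / vbar) * ∑ m ∈ Finset.Icc 1 (n - 1),
          ((Nat.factorial (n - 1) / (Nat.factorial (n - 1 - m) * Nat.factorial (m - 1)) : ℕ) : ℝ) *
            (Real.log ((m : ℝ) + ω₀) - Real.log ((m : ℝ) - 1 + ω₀)) *
            (v / vbar) ^ (m - 1) * (1 - v / vbar) ^ (n - 1 - m)) ∧
      0 < deriv (Jt n ω₀ vbar) v ∧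
      deriv (deriv (Jt n ω₀ vbar)) v < 0 := by
  have hω₀ : 0 < ω₀ := by linarith
  have hpos : ∀ v ∈ Set.Icc 0 vbar, 0 < deriv (Jt n ω₀ vbar) v := fun v =>
    deriv_Jt_pos (by omega) hω₀ hv
  have hneg : ∀ v ∈ Set.Icc 0 vbar, deriv (deriv (Jt n ω₀ vbar)) v < 0 := fun v =>
    deriv_deriv_Jt_neg hn hω₀ hv
  have hcont : ContinuousOn (Jt n ω₀ vbar) (Set.Icc 0 vbar) := (continuous_Jt n).continuousOn
  refine ⟨strictMonoOn_of_deriv_pos (convex_Icc 0 vbar) hcont fun v hv' => ?_,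
    strictConcaveOn_of_deriv2_neg (convex_Icc 0 vbar) hcont fun v hv' => ?_,
    fun v hv' => ⟨deriv_Jt_eq_sum (by omega) v, hpos v hv', hneg v hv'⟩⟩
  · rw [interior_Icc] at hv'
    exact hpos v (Set.Ioo_subset_Icc_self hv')
  · rw [interior_Icc] at hv'
    exact hneg v (Set.Ioo_subset_Icc_self hv')
end

section
/- Let δ ∈ (0,1), v̄ > 0 and v* ∈ [0, v̄] (so that δ·v* < v̄), and define the seller's expected non-profiled revenue per user R : [0, v̄] → ℝ by R(p) = p·(1 − (1−δ)·p/(v̄ − δ·v*)) if p ≤ v*, and R(p) = p·(v̄ − p)/(v̄ − δ·v*) if p > v*. Then R attains its maximum over [0, v̄] at the point p₀* given by: p₀* = v̄/2 if v* ≤ v̄/2; p₀* = v* if v̄/2 < v* ≤ v̄/(2−δ); and p₀* = (v̄ − δ·v*)/(2(1−δ)) if v̄/(2−δ) < v* ≤ v̄. -/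
open Set

/-!
Writing `D = v̄ - δ v*`, the revenue is the quadratic `L p = p (D - (1 - δ) p) / D`
(`revenueBelow`) for `p ≤ v*` and the quadratic `H p = p (v̄ - p) / D` (`revenueAbove`) beyond.
Since `L p - H p = δ p (p - v*) / D`, the revenue is `min (L p) (H p)` for `p ≥ 0`.
When the vertex of `H` (at `v̄ / 2`) lies on the high-price side or the vertex of `L`
(at `D / (2 (1 - δ))`) lies on the low-price side, that vertex is the maximum; otherwise `L`
increases up to `v*` and `H` decreases after it, so the kink `v*` is the maximum.
-/

theorem IsMaxOn.of_le_of_eq {α β : Type*} [Preorder β] {f g : α → β} {s : Set α} {a : α}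
    (hg : IsMaxOn g s a) (hfg : ∀ x ∈ s, f x ≤ g x) (ha : f a = g a) : IsMaxOn f s a :=
  isMaxOn_iff.2 fun x hx => (hfg x hx).trans (ha ▸ isMaxOn_iff.1 hg x hx)

theorem mul_sub_mul_le_mul_sub_mul {a b p x : ℝ} (h : 0 ≤ (x - p) * (a - b * (x + p))) :
    p * (a - b * p) ≤ x * (a - b * x) := by
  have hdiff : x * (a - b * x) - p * (a - b * p) = (x - p) * (a - b * (x + p)) := by ring
  linarith

theorem vertex_sub_mul_vertex_add_nonneg {a b : ℝ} (hb : 0 < b) (p : ℝ) :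
    0 ≤ (a / (2 * b) - p) * (a - b * (a / (2 * b) + p)) := by
  have hfactor : a - b * (a / (2 * b) + p) = b * (a / (2 * b) - p) := by
    field_simp
    ring
  rw [hfactor, mul_left_comm]
  exact mul_nonneg hb.le (mul_self_nonneg _)

theorem sub_mul_pos_of_lt_one {δ vbar vstar : ℝ} (hδ₀ : 0 ≤ δ) (hδ₁ : δ < 1)
    (hv : 0 < vbar) (hvs : vstar ≤ vbar) : 0 < vbar - δ * vstar :=
  sub_pos.2 <| (mul_le_mul_of_nonneg_left hvs hδ₀).trans_lt (mul_lt_of_lt_one_left hv hδ₁)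

noncomputable def revenueBelow (δ vbar vstar p : ℝ) : ℝ :=
  p * (1 - (1 - δ) * p / (vbar - δ * vstar))

noncomputable def revenueAbove (δ vbar vstar p : ℝ) : ℝ := p * (vbar - p) / (vbar - δ * vstar)

noncomputable def revenue (δ vbar vstar p : ℝ) : ℝ :=
  if p ≤ vstar then revenueBelow δ vbar vstar p else revenueAbove δ vbar vstar p

noncomputable def optimalPrice (δ vbar vstar : ℝ) : ℝ :=
  if vstar ≤ vbar / 2 then vbar / 2
  else if vstar ≤ vbar / (2 - δ) then vstar
  else (vbar - δ * vstar) / (2 * (1 - δ))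

section Revenue

variable {δ vbar vstar p x : ℝ}

theorem revenueBelow_eq (hD : vbar - δ * vstar ≠ 0) :
    revenueBelow δ vbar vstar p =
      p * ((vbar - δ * vstar) - (1 - δ) * p) / (vbar - δ * vstar) := by
  unfold revenueBelow
  field_simp

theorem revenueBelow_sub_revenueAbove (hD : vbar - δ * vstar ≠ 0) :
    revenueBelow δ vbar vstar p - revenueAbove δ vbar vstar p =
      δ * p * (p - vstar) / (vbar - δ * vstar) := by
  rw [revenueBelow_eq hD, revenueAbove, ← sub_div]
  ring_nf

theorem revenueBelow_le_revenueBelow (hD : 0 < vbar - δ * vstar)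
    (h : 0 ≤ (x - p) * ((vbar - δ * vstar) - (1 - δ) * (x + p))) :
    revenueBelow δ vbar vstar p ≤ revenueBelow δ vbar vstar x := by
  rw [revenueBelow_eq hD.ne', revenueBelow_eq hD.ne']
  exact div_le_div_of_nonneg_right (mul_sub_mul_le_mul_sub_mul h) hD.le

theorem revenueAbove_le_revenueAbove (hD : 0 < vbar - δ * vstar)
    (h : 0 ≤ (x - p) * (vbar - (x + p))) :
    revenueAbove δ vbar vstar p ≤ revenueAbove δ vbar vstar x := by
  have hquad := mul_sub_mul_le_mul_sub_mul (b := 1) (by rwa [one_mul])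
  rw [one_mul, one_mul] at hquad
  exact div_le_div_of_nonneg_right hquad hD.le

theorem revenue_of_le (h : p ≤ vstar) : revenue δ vbar vstar p = revenueBelow δ vbar vstar p :=
  if_pos h

theorem revenue_of_ge (hD : vbar - δ * vstar ≠ 0) (h : vstar ≤ p) :
    revenue δ vbar vstar p = revenueAbove δ vbar vstar p := by
  rcases h.eq_or_lt with rfl | hlt
  · rw [revenue_of_le le_rfl, ← sub_eq_zero, revenueBelow_sub_revenueAbove hD]
    simp
  · exact if_neg hlt.not_ge

theorem revenue_le_revenueBelow (hδ : 0 ≤ δ) (hD : 0 < vbar - δ * vstar) (hp : 0 ≤ p) :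
    revenue δ vbar vstar p ≤ revenueBelow δ vbar vstar p := by
  unfold revenue
  split_ifs with h
  · exact le_rfl
  · have hgap : 0 ≤ δ * p * (p - vstar) / (vbar - δ * vstar) :=
      div_nonneg (mul_nonneg (mul_nonneg hδ hp) (by linarith [not_le.1 h])) hD.le
    linarith [revenueBelow_sub_revenueAbove (p := p) hD.ne']

theorem revenue_le_revenueAbove (hδ : 0 ≤ δ) (hD : 0 < vbar - δ * vstar) (hp : 0 ≤ p) :
    revenue δ vbar vstar p ≤ revenueAbove δ vbar vstar p := by
  unfold revenue
  split_ifs with h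
  · have hgap : δ * p * (p - vstar) / (vbar - δ * vstar) ≤ 0 :=
      div_nonpos_of_nonpos_of_nonneg
        (mul_nonpos_of_nonneg_of_nonpos (mul_nonneg hδ hp) (by linarith)) hD.le
    linarith [revenueBelow_sub_revenueAbove (p := p) hD.ne']
  · exact le_rfl

theorem vertex_lt_of_lt (hδ : δ < 1) (h : vbar < (2 - δ) * vstar) :
    (vbar - δ * vstar) / (2 * (1 - δ)) < vstar := by
  rw [div_lt_iff₀ (by linarith)]
  linarith

theorem isMaxOn_revenue_half (hδ : 0 ≤ δ) (hD : 0 < vbar - δ * vstar)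
    (h : vstar ≤ vbar / 2) :
    IsMaxOn (revenue δ vbar vstar) (Ici 0) (vbar / 2) := by
  refine IsMaxOn.of_le_of_eq (g := revenueAbove δ vbar vstar) ?_
    (fun p hp => revenue_le_revenueAbove hδ hD hp) (revenue_of_ge hD.ne' h)
  refine isMaxOn_iff.2 fun p _ => revenueAbove_le_revenueAbove hD ?_
  nlinarith [sq_nonneg (vbar / 2 - p)]

theorem isMaxOn_revenue_vstar (hδ : δ < 1) (hD : 0 < vbar - δ * vstar) (h₁ : vbar / 2 < vstar)
    (h₂ : (2 - δ) * vstar ≤ vbar) : IsMaxOn (revenue δ vbar vstar) univ vstar := by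
  refine isMaxOn_iff.2 fun p _ => ?_
  rcases le_total p vstar with hp | hp
  · rw [revenue_of_le hp, revenue_of_le le_rfl]
    refine revenueBelow_le_revenueBelow hD (mul_nonneg (sub_nonneg.2 hp) ?_)
    nlinarith
  · rw [revenue_of_ge hD.ne' hp, revenue_of_ge hD.ne' le_rfl]
    exact revenueAbove_le_revenueAbove hD
      (mul_nonneg_of_nonpos_of_nonpos (by linarith) (by linarith))

theorem isMaxOn_revenue_vertex (hδ₀ : 0 ≤ δ) (hδ₁ : δ < 1) (hD : 0 < vbar - δ * vstar)
    (h : vbar < (2 - δ) * vstar) :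
    IsMaxOn (revenue δ vbar vstar) (Ici 0) ((vbar - δ * vstar) / (2 * (1 - δ))) := by
  have hvertex := (vertex_lt_of_lt hδ₁ h).le
  refine IsMaxOn.of_le_of_eq (g := revenueBelow δ vbar vstar) ?_
    (fun p hp => revenue_le_revenueBelow hδ₀ hD hp) (revenue_of_le hvertex)
  exact isMaxOn_iff.2 fun p _ => revenueBelow_le_revenueBelow hD
    (vertex_sub_mul_vertex_add_nonneg (sub_pos.2 hδ₁) p)

theorem optimalPrice_mem_Icc (hδ : δ ∈ Ioo (0 : ℝ) 1) (hv : 0 < vbar)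
    (hvs : vstar ∈ Icc (0 : ℝ) vbar) : optimalPrice δ vbar vstar ∈ Icc 0 vbar := by
  unfold optimalPrice
  split_ifs with h₁ h₂
  · constructor <;> linarith
  · exact hvs
  · have hD := sub_mul_pos_of_lt_one hδ.1.le hδ.2 hv hvs.2
    have h : vbar < (2 - δ) * vstar := by
      rwa [not_le, div_lt_iff₀ (by linarith [hδ.2]), mul_comm] at h₂
    have h1δ := sub_pos.2 hδ.2
    exact ⟨by positivity, (vertex_lt_of_lt hδ.2 h).le.trans hvs.2⟩

theorem isMaxOn_revenue_optimalPrice (hδ : δ ∈ Ioo (0 : ℝ) 1) (hv : 0 < vbar)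
    (hvs : vstar ≤ vbar) :
    IsMaxOn (revenue δ vbar vstar) (Ici 0) (optimalPrice δ vbar vstar) := by
  have hD := sub_mul_pos_of_lt_one hδ.1.le hδ.2 hv hvs
  have h2δ : 0 < 2 - δ := by linarith [hδ.2]
  unfold optimalPrice
  split_ifs with h₁ h₂
  · exact isMaxOn_revenue_half hδ.1.le hD h₁
  · rw [le_div_iff₀ h2δ, mul_comm] at h₂
    exact (isMaxOn_revenue_vstar hδ.2 hD (not_le.1 h₁) h₂).on_subset (subset_univ _)
  · rw [not_le, div_lt_iff₀ h2δ, mul_comm] at h₂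
    exact isMaxOn_revenue_vertex hδ.1.le hδ.2 hD h₂

end Revenue

/-- The seller's expected non-profiled revenue per user `R(p)` (piecewise in the
uniform price `p`, given profiling accuracy `δ` and users' valuation threshold `v*`)
attains its maximum over `[0, v̄]` at the piecewise-defined uniform price `p₀*`. -/
theorem stmt1 (δ vbar vstar : ℝ) (hδ : δ ∈ Set.Ioo (0 : ℝ) 1) (hv : 0 < vbar)
    (hvs : vstar ∈ Set.Icc (0 : ℝ) vbar) :
    (if vstar ≤ vbar / 2 then vbar / 2
     else if vstar ≤ vbar / (2 - δ) then vstar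
     else (vbar - δ * vstar) / (2 * (1 - δ))) ∈ Set.Icc (0 : ℝ) vbar ∧
    IsMaxOn
      (fun p => if p ≤ vstar then p * (1 - (1 - δ) * p / (vbar - δ * vstar))
                else p * (vbar - p) / (vbar - δ * vstar))
      (Set.Icc 0 vbar)
      (if vstar ≤ vbar / 2 then vbar / 2
       else if vstar ≤ vbar / (2 - δ) then vstar
       else (vbar - δ * vstar) / (2 * (1 - δ))) :=
  ⟨optimalPrice_mem_Icc hδ hv hvs,
    (isMaxOn_revenue_optimalPrice hδ hv hvs.2).on_subset Icc_subset_Ici_self⟩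
end

section
/- Let n ≥ 3 be an integer, ω₀ > 1, v̄ > 2·ln(n−1+ω₀), and δ ∈ (2·ln(n−1+ω₀)/v̄, 1). Let v* ∈ (v̄/(2−δ), v̄) be the unique solution of δ(2−δ)·v − 2(1−δ)·J̃(v) = δ·v̄, and set p₀* = (v̄ − δ·v*)/(2(1−δ)). Then (1+δ)·v̄/2 − p₀* − ln(n−1+ω₀) > 0. -/
/-!
The network benefit `ln (m + ω₀)` is concave in the number `m` of active peers and nonnegative
at `m = 0`, so it lies above its chord `(m / (n - 1)) · L`, where `L = ln (n - 1 + ω₀)`. Averaging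
over the binomial number of active peers gives `J̃(v) ≥ (v / v̄) · L`. Feeding this into the
equilibrium equation for `v*` turns the claimed margin `G` into the bound
`2 (1 - δ) v* G ≥ δ (v̄ - v*)² > 0`.
-/

open Real Finset

lemma sum_natCast_mul_choose_mul_pow_mul_one_sub_pow (k : ℕ) (p : ℝ) :
    ∑ m ∈ range (k + 1), (m : ℝ) * k.choose m * p ^ m * (1 - p) ^ (k - m) = k * p := by
  have h := congrArg (Polynomial.eval p) (bernsteinPolynomial.sum_smul ℝ k)
  simpa [bernsteinPolynomial, Polynomial.eval_finsetSum, mul_assoc, mul_comm, mul_left_comm]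
    using h

lemma mul_log_add_le_log_mul_add {t x ω : ℝ} (ht₀ : 0 ≤ t) (ht₁ : t ≤ 1) (hx : 0 ≤ x)
    (hω : 1 ≤ ω) : t * log (x + ω) ≤ log (t * x + ω) := by
  have hconc := strictConcaveOn_log_Ioi.concaveOn.2 (x := ω) (y := x + ω)
    (by simp only [Set.mem_Ioi]; linarith) (by simp only [Set.mem_Ioi]; linarith)
    (sub_nonneg.2 ht₁) ht₀ (by ring)
  have harg : (1 - t) • ω + t • (x + ω) = t * x + ω := by simp only [smul_eq_mul]; ring
  rw [harg, smul_eq_mul, smul_eq_mul] at hconc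
  nlinarith [log_nonneg hω]

lemma div_mul_log_le_Jt {n : ℕ} (hn : 2 ≤ n) {ω₀ vbar v : ℝ} (hω : 1 ≤ ω₀)
    (hp₀ : 0 ≤ v / vbar) (hp₁ : v / vbar ≤ 1) :
    v / vbar * log ((n : ℝ) - 1 + ω₀) ≤ Jt n ω₀ vbar v := by
  obtain ⟨k, rfl⟩ : ∃ k, n = k + 1 := ⟨n - 1, by omega⟩
  have hk : (0 : ℝ) < k := by exact_mod_cast (by omega : 0 < k)
  set p := v / vbar
  set L := log ((k : ℝ) + ω₀)
  have hchord : ∀ m ∈ range (k + 1), (m : ℝ) / k * L ≤ log ((m : ℝ) + ω₀) := by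
    intro m hm
    have hmk : (m : ℝ) ≤ k := by exact_mod_cast Nat.lt_succ_iff.mp (mem_range.mp hm)
    simpa [div_mul_cancel₀ _ hk.ne'] using
      mul_log_add_le_log_mul_add (x := k) (by positivity) (div_le_one_of_le₀ hmk hk.le)
        hk.le hω
  have hcast : ((k + 1 : ℕ) : ℝ) - 1 = k := by push_cast; ring
  rw [Jt, hcast, Nat.add_sub_cancel]
  calc p * L = L / k * (k * p) := by field_simp
    _ = ∑ m ∈ range (k + 1), (m : ℝ) / k * L * (k.choose m * p ^ m * (1 - p) ^ (k - m)) := by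
        rw [← sum_natCast_mul_choose_mul_pow_mul_one_sub_pow, mul_sum]
        exact sum_congr rfl fun m _ => by ring
    _ ≤ ∑ m ∈ range (k + 1), log ((m : ℝ) + ω₀) * (k.choose m * p ^ m * (1 - p) ^ (k - m)) := by
        gcongr with m hm
        exact hchord m hm
    _ = ∑ m ∈ range (k + 1), (k.choose m : ℝ) * log ((m : ℝ) + ω₀) * p ^ m * (1 - p) ^ (k - m) :=
        sum_congr rfl fun m _ => by ring

lemma equilibrium_margin_pos {δ vbar vstar J L : ℝ} (hδ₀ : 0 < δ) (hδ₁ : δ < 1)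
    (hvstar₀ : 0 < vstar) (hvstar₁ : vstar < vbar) (hJ : L * vstar ≤ J * vbar)
    (heq : δ * (2 - δ) * vstar - 2 * (1 - δ) * J = δ * vbar) :
    0 < (1 + δ) * vbar / 2 - (vbar - δ * vstar) / (2 * (1 - δ)) - L := by
  set G := (1 + δ) * vbar / 2 - (vbar - δ * vstar) / (2 * (1 - δ)) - L
  have hG : 2 * (1 - δ) * G = δ * (vstar - δ * vbar) - 2 * (1 - δ) * L := by
    simp only [G]
    field_simp [(by linarith : (1 - δ) ≠ 0)]
    ring
  have hbound : δ * (vbar - vstar) ^ 2 ≤ 2 * (1 - δ) * vstar * G := by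
    nlinarith [mul_le_mul_of_nonneg_left hJ (by linarith : (0 : ℝ) ≤ 2 * (1 - δ))]
  have hpos : 0 < δ * (vbar - vstar) ^ 2 := by
    have := sub_pos.2 hvstar₁
    positivity
  exact pos_of_mul_pos_right (hpos.trans_le hbound) (by positivity)

/-- In the PBE with partially active users (`v*` the equilibrium threshold and
`p₀* = (v̄ − δv*)/(2(1−δ))` the equilibrium uniform price),
`(1+δ)·v̄/2 − p₀* − ln(n−1+ω₀) > 0`. -/
theorem stmt7 (n : ℕ) (hn : 3 ≤ n) (ω₀ δ vbar vstar : ℝ) (hω : 1 < ω₀)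
    (hv : 2 * Real.log ((n : ℝ) - 1 + ω₀) < vbar)
    (hδ : δ ∈ Set.Ioo (2 * Real.log ((n : ℝ) - 1 + ω₀) / vbar) 1)
    (hvs : vstar ∈ Set.Ioo (vbar / (2 - δ)) vbar)
    (heq : δ * (2 - δ) * vstar - 2 * (1 - δ) * Jt n ω₀ vbar vstar = δ * vbar) :
    0 < (1 + δ) * vbar / 2 - (vbar - δ * vstar) / (2 * (1 - δ)) -
      Real.log ((n : ℝ) - 1 + ω₀) := by
  obtain ⟨hδ₀, hδ₁⟩ := hδ
  obtain ⟨hvstar₀, hvstar₁⟩ := hvs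
  have hL : 0 < log ((n : ℝ) - 1 + ω₀) := by
    have : (3 : ℝ) ≤ n := by exact_mod_cast hn
    exact log_pos (by linarith)
  have hvbar : 0 < vbar := by linarith
  have hδ : 0 < δ := lt_trans (by positivity) hδ₀
  have hvstar : 0 < vstar := lt_trans (div_pos hvbar (by linarith)) hvstar₀
  have hJ := div_mul_log_le_Jt (n := n) (by omega) hω.le (div_nonneg hvstar.le hvbar.le)
    (div_le_one_of_le₀ hvstar₁.le hvbar.le)
  refine equilibrium_margin_pos hδ hδ₁ hvstar hvstar₁ ?_ heq
  rw [div_mul_eq_mul_div, div_le_iff₀ hvbar] at hJ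
  linarith
end

section
/- Let n ≥ 2 be an integer and ω₀ > 1 a real number. For 1 ≤ k ≤ n−1 set C_k = binom(n−2, k−1) and L_k = ln(k+ω₀) − ln(k−1+ω₀). Then (n−1) · Σ_{m=1}^{n−1} C_m · L_m ≤ (Σ_{k=1}^{n−1} C_k) · (Σ_{m=1}^{n−1} L_m). -/
/-!
Reflect the index through `m ↦ n - m`. The binomial weights are invariant, and with
`a = m - 1 + ω₀`, `b = n - m - 1 + ω₀` the symmetrized increment is
`L_m + L_{n-m} = log (1 + (a + b + 1) / (a b))`, where `a + b` does not depend on `m` and `a b`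
grows towards the centre. So both the weights and the symmetrized increments are functions of
`|2m - n|`, the first decreasing and the second increasing: they antivary, and Chebyshev's sum
inequality for them, averaged over the reflection, is the claim.
-/

open Real Finset

theorem Nat.choose_le_choose_of_le_of_le_half {n a b : ℕ} (hab : a ≤ b) (hb : b ≤ n / 2) :
    n.choose a ≤ n.choose b := by
  induction b, hab using Nat.le_induction with
  | base => rfl
  | succ k _ ih => exact (ih (by omega)).trans (choose_le_succ_of_lt_half_left (by omega))

theorem Nat.choose_eq_choose_min_sub {n i : ℕ} (hi : i ≤ n) :
    n.choose i = n.choose (min i (n - i)) := by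
  rcases le_total i (n - i) with h | h
  · rw [min_eq_left h]
  · rw [min_eq_right h, choose_symm hi]

theorem Nat.choose_le_choose_of_abs_le {n i j : ℕ} (h : |(2 * i : ℤ) - n| ≤ |(2 * j : ℤ) - n|) :
    n.choose j ≤ n.choose i := by
  rcases le_or_gt j n with hj | hj
  · obtain ⟨hi, hmin⟩ : i ≤ n ∧ min j (n - j) ≤ min i (n - i) := by
      rcases abs_cases ((2 * i : ℤ) - n) with h1 | h1 <;>
        rcases abs_cases ((2 * j : ℤ) - n) with h2 | h2 <;> omega
    rw [choose_eq_choose_min_sub hi, choose_eq_choose_min_sub hj]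
    exact choose_le_choose_of_le_of_le_half hmin (by omega)
  · simp [choose_eq_zero_of_lt hj]

theorem Finset.card_mul_sum_mul_le_of_antivaryOn_add_comp {ι α : Type*} [Field α] [LinearOrder α]
    [IsStrictOrderedRing α] {s : Finset ι} {f g : ι → α} (σ : ι → ι)
    (hσ : ∀ i ∈ s, σ i ∈ s) (hσσ : ∀ i ∈ s, σ (σ i) = i) (hf : ∀ i ∈ s, f (σ i) = f i)
    (hfg : AntivaryOn f (fun i ↦ g i + g (σ i)) s) :
    #s * ∑ i ∈ s, f i * g i ≤ (∑ i ∈ s, f i) * ∑ i ∈ s, g i := by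
  have sum_comp (h : ι → α) : ∑ i ∈ s, h (σ i) = ∑ i ∈ s, h i :=
    sum_nbij' σ σ hσ hσ hσσ hσσ fun _ _ ↦ rfl
  have hfg_sum : ∑ i ∈ s, f i * (g i + g (σ i)) = 2 * ∑ i ∈ s, f i * g i := by
    calc ∑ i ∈ s, f i * (g i + g (σ i))
        = ∑ i ∈ s, f i * g i + ∑ i ∈ s, f (σ i) * g (σ i) := by
          rw [← sum_add_distrib]
          exact sum_congr rfl fun i hi ↦ by rw [hf i hi, mul_add]
      _ = 2 * ∑ i ∈ s, f i * g i := by rw [sum_comp (fun i ↦ f i * g i), two_mul]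
  have hg_sum : ∑ i ∈ s, (g i + g (σ i)) = 2 * ∑ i ∈ s, g i := by
    rw [sum_add_distrib, sum_comp g, two_mul]
  have := hfg.card_mul_sum_le_sum_mul_sum
  rw [hfg_sum, hg_sum] at this
  linarith

noncomputable def logIncrement (t : ℝ) : ℝ := log (t + 1) - log t

theorem logIncrement_add_logIncrement {a b : ℝ} (ha : 0 < a) (hb : 0 < b) :
    logIncrement a + logIncrement b = log (1 + (a + b + 1) / (a * b)) := by
  have hab : 1 + (a + b + 1) / (a * b) = (a + 1) * (b + 1) / (a * b) := by
    field_simp; ring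
  rw [hab, log_div (by positivity) (by positivity), log_mul (by positivity) (by positivity),
    log_mul ha.ne' hb.ne', logIncrement, logIncrement]
  ring

theorem logIncrement_add_logIncrement_le {a b a' b' : ℝ} (ha : 0 < a) (hb : 0 < b)
    (ha' : 0 < a') (hb' : 0 < b') (hsum : a + b = a' + b') (hprod : a * b ≤ a' * b') :
    logIncrement a' + logIncrement b' ≤ logIncrement a + logIncrement b := by
  rw [logIncrement_add_logIncrement ha hb, logIncrement_add_logIncrement ha' hb', ← hsum]
  gcongr

theorem antivaryOn_choose_logIncrement_add_reflect (n : ℕ) {ω : ℝ} (hω : 0 < ω) :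
    AntivaryOn (fun m ↦ ((n - 2).choose (m - 1) : ℝ))
      (fun m ↦ logIncrement ((m : ℝ) - 1 + ω) + logIncrement (((n - m : ℕ) : ℝ) - 1 + ω))
      (Icc 1 (n - 1)) := by
  intro k hk m hm hT
  simp only [coe_Icc, Set.mem_Icc] at hk hm
  simp only [Nat.cast_sub (by omega : k ≤ n), Nat.cast_sub (by omega : m ≤ n)] at hT ⊢
  have hk1 : (1 : ℝ) ≤ k := by exact_mod_cast hk.1
  have hkn : (k : ℝ) + 1 ≤ n := by exact_mod_cast (by omega : k + 1 ≤ n)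
  have hm1 : (1 : ℝ) ≤ m := by exact_mod_cast hm.1
  have hmn : (m : ℝ) + 1 ≤ n := by exact_mod_cast (by omega : m + 1 ≤ n)
  have hprod : ((m : ℝ) - 1 + ω) * (n - m - 1 + ω) < (k - 1 + ω) * (n - k - 1 + ω) := by
    by_contra! h
    exact hT.not_ge <| logIncrement_add_logIncrement_le (by linarith) (by linarith)
      (by linarith) (by linarith) (by ring) h
  -- `4 (x - 1 + ω) (n - x - 1 + ω) = (n - 2 + 2ω)² - (2x - n)²`
  have hsq : (2 * k - n : ℤ) ^ 2 ≤ (2 * m - n) ^ 2 := by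
    have : ((2 * k - n : ℤ) : ℝ) ^ 2 ≤ ((2 * m - n : ℤ) : ℝ) ^ 2 := by push_cast; nlinarith
    exact_mod_cast this
  have hsq' : ((2 * (k - 1 : ℕ) : ℤ) - (n - 2 : ℕ)) ^ 2 ≤
      ((2 * (m - 1 : ℕ) : ℤ) - (n - 2 : ℕ)) ^ 2 := by
    push_cast [Nat.cast_sub hk.1, Nat.cast_sub hm.1, Nat.cast_sub (by omega : 2 ≤ n)]
    linear_combination hsq
  exact_mod_cast Nat.choose_le_choose_of_abs_le (sq_le_sq.mp hsq')

/-- Chebyshev-sum-type inequality between the binomial coefficients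
`C_k = C(n−2, k−1)` and the logarithmic increments `L_k = ln(k+ω₀) − ln(k−1+ω₀)`:
`(n−1) · Σ C_m·L_m ≤ (Σ C_k) · (Σ L_m)`. -/
theorem stmt10 (n : ℕ) (hn : 2 ≤ n) (ω₀ : ℝ) (hω : 1 < ω₀) :
    ((n : ℝ) - 1) * ∑ m ∈ Finset.Icc 1 (n - 1),
        (Nat.choose (n - 2) (m - 1) : ℝ) *
          (Real.log ((m : ℝ) + ω₀) - Real.log ((m : ℝ) - 1 + ω₀)) ≤
      (∑ k ∈ Finset.Icc 1 (n - 1), (Nat.choose (n - 2) (k - 1) : ℝ)) *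
      (∑ m ∈ Finset.Icc 1 (n - 1),
        (Real.log ((m : ℝ) + ω₀) - Real.log ((m : ℝ) - 1 + ω₀))) := by
  have hL (x : ℝ) : log (x + ω₀) - log (x - 1 + ω₀) = logIncrement (x - 1 + ω₀) := by
    rw [logIncrement, show x - 1 + ω₀ + 1 = x + ω₀ by ring]
  have hcard : (#(Icc 1 (n - 1)) : ℝ) = n - 1 := by
    rw [Nat.card_Icc, Nat.add_sub_cancel, Nat.cast_sub (by omega), Nat.cast_one]
  simp only [hL, ← hcard]
  refine card_mul_sum_mul_le_of_antivaryOn_add_comp (n - ·) ?_ ?_ ?_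
    (antivaryOn_choose_logIncrement_add_reflect n (by linarith))
  all_goals intro m hm; rw [mem_Icc] at hm
  · rw [mem_Icc]; omega
  · omega
  · rw [show n - m - 1 = n - 2 - (m - 1) by omega, Nat.choose_symm (by omega)]
end

section
/- For every integer n ≥ 4, the third derivative of J̃ is strictly positive on [0, v̄]: J̃'''(v) > 0 for all v ∈ [0, v̄]. -/
open Real Finset

/-!
Writing `x = v / v̄` and `a m = log (m + ω₀)`, `J̃` is the Bernstein combination
`∑ a m * b_{n-1,m}(x)`. Differentiating a Bernstein combination of degree `k + 1` gives
`k + 1` times the degree-`k` combination of the forward differences `Δa`, so `J̃'''` is a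
positive multiple of the Bernstein combination of `Δ³a`. Now `Δ³ log > 0` because
`t (t + 2)³ < (t + 3) (t + 1)³` (the difference is `2t + 3`), and a Bernstein combination with
positive coefficients is positive on `[0, 1]`, the basis being a nonnegative partition of unity.
-/

open Polynomial fwdDiff

noncomputable def bernsteinCombination {R : Type*} [CommRing R] (k : ℕ) (a : ℕ → R) : R[X] :=
  ∑ m ∈ range (k + 1), C (a m) * bernsteinPolynomial R k m

section

variable {R : Type*} [CommRing R]

theorem eval_bernsteinCombination (k : ℕ) (a : ℕ → R) (x : R) :
    (bernsteinCombination k a).eval x =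
      ∑ m ∈ range (k + 1), (k.choose m : R) * a m * x ^ m * (1 - x) ^ (k - m) := by
  simp only [bernsteinCombination, bernsteinPolynomial, eval_finsetSum, eval_mul, eval_C,
    eval_pow, eval_sub, eval_one, eval_X, eval_natCast]
  exact sum_congr rfl fun m _ => by ring

theorem derivative_bernsteinCombination_succ (k : ℕ) (a : ℕ → R) :
    derivative (bernsteinCombination (k + 1) a) =
      (k + 1 : R[X]) * bernsteinCombination k (Δ_[1] a) := by
  have hlast : bernsteinPolynomial R k (k + 1) = 0 :=
    bernsteinPolynomial.eq_zero_of_lt R k.lt_succ_self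
  simp only [bernsteinCombination, derivative_sum, derivative_C_mul]
  rw [sum_range_succ', bernsteinPolynomial.derivative_zero]
  simp only [bernsteinPolynomial.derivative_succ, fwdDiff, map_sub, sub_mul, mul_sub,
    sum_sub_distrib, Nat.add_sub_cancel, Nat.cast_add, Nat.cast_one]
  rw [sum_range_succ (fun x => C (a (x + 1)) * (_ * bernsteinPolynomial R k (x + 1))), hlast,
    sum_range_succ' (fun x => C (a x) * bernsteinPolynomial R k x)]
  simp only [mul_zero, add_zero, mul_left_comm (C _) ((k : R[X]) + 1), ← mul_sum]
  ring

theorem iterate_derivative_bernsteinCombination (j k : ℕ) (a : ℕ → R) :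
    derivative^[j] (bernsteinCombination (k + j) a) =
      ((k + j).descFactorial j : R[X]) * bernsteinCombination k ((Δ_[1])^[j] a) := by
  induction j generalizing a with
  | zero => simp
  | succ j ih =>
    rw [Function.iterate_succ_apply, ← add_assoc, derivative_bernsteinCombination_succ,
      show ((k + j : ℕ) : R[X]) + 1 = ((k + j + 1 : ℕ) : R[X]) by push_cast; rfl,
      iterate_derivative_natCast_mul, ih, Function.iterate_succ_apply,
      Nat.succ_descFactorial_succ]
    push_cast
    ring

end

theorem bernsteinCombination_eval_pos {k : ℕ} {a : ℕ → ℝ} (ha : ∀ m ≤ k, 0 < a m) {x : ℝ}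
    (hx : x ∈ Set.Icc (0 : ℝ) 1) : 0 < (bernsteinCombination k a).eval x := by
  have hb (m : ℕ) : 0 ≤ (bernsteinPolynomial ℝ k m).eval x := bernstein_nonneg (x := ⟨x, hx⟩)
  have hsum : ∑ m ∈ range (k + 1), (bernsteinPolynomial ℝ k m).eval x = 1 := by
    rw [← eval_finsetSum, bernsteinPolynomial.sum, eval_one]
  obtain ⟨m, hm, hpos⟩ : ∃ m ∈ range (k + 1), 0 < (bernsteinPolynomial ℝ k m).eval x :=
    exists_lt_of_sum_lt (f := fun _ => 0) (by rw [hsum, sum_const_zero]; exact one_pos)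
  simp only [bernsteinCombination, eval_finsetSum, eval_mul, eval_C]
  exact sum_pos' (fun i hi => mul_nonneg (ha i (mem_range_succ_iff.mp hi)).le (hb i))
    ⟨m, hm, mul_pos (ha m (mem_range_succ_iff.mp hm)) hpos⟩

theorem iter_deriv_polynomial_eval {𝕜 : Type*} [NontriviallyNormedField 𝕜]
    (p : 𝕜[X]) (j : ℕ) :
    deriv^[j] (fun x => p.eval x) = fun x => (derivative^[j] p).eval x := by
  induction j generalizing p with
  | zero => rfl
  | succ j ih =>
    have h : deriv (fun x => p.eval x) = fun x => p.derivative.eval x := funext fun _ => p.deriv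
    rw [Function.iterate_succ_apply, h, ih, Function.iterate_succ_apply]

theorem log_third_difference_pos {s : ℝ} (hs : 0 < s) :
    0 < log (s + 3) - 3 * log (s + 2) + 3 * log (s + 1) - log s := by
  have key : s * (s + 2) ^ 3 < (s + 3) * (s + 1) ^ 3 := by nlinarith
  have := log_lt_log (by positivity) key
  rw [log_mul (by positivity) (by positivity), log_mul (by positivity) (by positivity),
    log_pow, log_pow] at this
  push_cast at this
  linarith

theorem log_fwdDiff_iter_three_pos {t : ℝ} (ht : 0 < t) (m : ℕ) :
    0 < (Δ_[1])^[3] (fun k : ℕ => log (k + t)) m := by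
  have := log_third_difference_pos (s := m + t) (by positivity)
  simp only [Function.iterate_succ_apply', Function.iterate_zero_apply, fwdDiff, Nat.cast_add,
    Nat.cast_one]
  ring_nf at this ⊢
  linarith

theorem Jt_eq_eval_bernsteinCombination (k : ℕ) (ω₀ vbar : ℝ) :
    Jt (k + 1) ω₀ vbar =
      fun v => (bernsteinCombination k fun m => log (m + ω₀)).eval (vbar⁻¹ * v) := by
  funext v
  simp only [Jt, eval_bernsteinCombination, Nat.add_sub_cancel, div_eq_inv_mul]

/-- For every integer `n ≥ 4`, the third derivative of `J̃` is strictly positive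
on `[0, v̄]`. -/
theorem stmt11 (n : ℕ) (hn : 4 ≤ n) (ω₀ vbar : ℝ) (hω : 1 < ω₀) (hv : 0 < vbar) :
    ∀ v ∈ Set.Icc (0 : ℝ) vbar, 0 < deriv (deriv (deriv (Jt n ω₀ vbar))) v := by
  obtain ⟨k, rfl⟩ : ∃ k, n = k + 3 + 1 := ⟨n - 4, by omega⟩
  rintro v ⟨hv0, hv1⟩
  have hsmooth (P : ℝ[X]) : ContDiff ℝ 3 fun x => P.eval x := by
    simpa only [coe_aeval_eq_eval] using P.contDiff_aeval (𝕜 := ℝ) 3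
  have hx : vbar⁻¹ * v ∈ Set.Icc (0 : ℝ) 1 :=
    ⟨by positivity, (inv_mul_le_one₀ hv).mpr hv1⟩
  have hpos : 0 < (bernsteinCombination k
      ((Δ_[1])^[3] fun m : ℕ => log (m + ω₀))).eval (vbar⁻¹ * v) :=
    bernsteinCombination_eval_pos (fun m _ => log_fwdDiff_iter_three_pos (by linarith) m) hx
  have hfac : 0 < ((k + 3).descFactorial 3 : ℝ) :=
    Nat.cast_pos.mpr (Nat.descFactorial_pos.mpr (by omega))
  change 0 < deriv^[3] (Jt (k + 3 + 1) ω₀ vbar) v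
  rw [Jt_eq_eval_bernsteinCombination, ← iteratedDeriv_eq_iterate,
    iteratedDeriv_comp_const_mul (hsmooth _), iteratedDeriv_eq_iterate, iter_deriv_polynomial_eval,
    iterate_derivative_bernsteinCombination]
  dsimp only
  rw [eval_mul, eval_natCast]
  positivity
end

section
/- For every integer n ≥ 2 and every v ∈ (0, v̄]: J̃(v)/v > J̃'(v). -/
open Real Finset

/-!
With `x = v / v̄` and `N = n - 1`, `J̃` is the Bernstein polynomial `f` of the sequence
`a_m = log (m + ω₀)`, and `J̃(v) - v J̃'(v) = f(x) - x f'(x)`. Since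
`x b'_{N,m} = m b_{N,m} - (m + 1) b_{N,m+1}`, this is again a Bernstein polynomial, with
coefficients `m a_{m-1} - (m - 1) a_m`. Concavity of `t ↦ log (t + ω₀)` bounds each of them
below by `a_0 = log ω₀ > 0`, and a Bernstein polynomial with nonnegative coefficients and a positive
last one is positive on `(0, 1]`.
-/

open Polynomial

theorem Polynomial.X_mul_derivative_X_pow {R : Type*} [CommSemiring R] (m : ℕ) :
    X * derivative (X ^ m : R[X]) = (m : R[X]) * X ^ m := by
  rcases m with _ | m
  · simp
  · rw [derivative_X_pow, C_eq_natCast, Nat.add_sub_cancel, pow_succ]; ring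

namespace bernsteinPolynomial

variable {R : Type*} [CommRing R]

theorem X_mul_derivative (n ν : ℕ) :
    X * derivative (bernsteinPolynomial R n ν) =
      (ν : R[X]) * bernsteinPolynomial R n ν -
        ((ν : R[X]) + 1) * bernsteinPolynomial R n (ν + 1) := by
  rcases lt_or_ge n ν with h | h
  · simp [eq_zero_of_lt R h, eq_zero_of_lt R (h.trans ν.lt_succ_self)]
  obtain ⟨k, rfl⟩ := Nat.exists_eq_add_of_le h
  have hX := X_mul_derivative_X_pow (R := R) ν
  simp only [bernsteinPolynomial, Nat.add_sub_cancel_left, derivative_mul, derivative_natCast,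
    zero_mul, zero_add]
  rcases k with _ | k
  · simp only [pow_zero, derivative_one, mul_zero, add_zero,
      Nat.choose_eq_zero_of_lt (Nat.lt_succ_self _), Nat.cast_zero]
    linear_combination ((ν + 0).choose ν : R[X]) * hX
  · have hchoose : ((ν + (k + 1)).choose (ν + 1) : R[X]) * (ν + 1) =
        ((ν + (k + 1)).choose ν) * (k + 1) := by
      have := Nat.choose_succ_right_eq (ν + (k + 1)) ν
      rw [Nat.add_sub_cancel_left] at this
      exact_mod_cast congrArg (Nat.cast : ℕ → R[X]) this
    rw [show ν + (k + 1) - (ν + 1) = k by omega, derivative_pow (1 - X : R[X]), derivative_sub,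
      derivative_one, derivative_X, Nat.add_sub_cancel, C_eq_natCast]
    push_cast
    linear_combination ((ν + (k + 1)).choose ν : R[X]) * (1 - X) ^ (k + 1) * hX +
      (X : R[X]) ^ (ν + 1) * (1 - X) ^ k * hchoose

theorem sum_smul_sub_X_mul_derivative (n : ℕ) (a : ℕ → R) :
    (∑ ν ∈ range (n + 1), a ν • bernsteinPolynomial R n ν) -
        X * derivative (∑ ν ∈ range (n + 1), a ν • bernsteinPolynomial R n ν) =
      ∑ ν ∈ range (n + 1), (ν * a (ν - 1) - (ν - 1) * a ν) • bernsteinPolynomial R n ν := by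
  have hterm (ν : ℕ) :
      a ν • bernsteinPolynomial R n ν - X * derivative (a ν • bernsteinPolynomial R n ν) =
        ((1 - ν : R) * a ν) • bernsteinPolynomial R n ν +
          ((ν + 1 : R) * a ν) • bernsteinPolynomial R n (ν + 1) := by
    rw [derivative_smul, mul_smul_comm, X_mul_derivative]
    simp only [smul_eq_C_mul, map_mul, map_sub, map_add, map_one, map_natCast]
    ring
  have hshift :
      ∑ ν ∈ range (n + 1), ((ν + 1 : R) * a ν) • bernsteinPolynomial R n (ν + 1) =
        ∑ ν ∈ range (n + 1), ((ν : R) * a (ν - 1)) • bernsteinPolynomial R n ν := by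
    rw [sum_range_succ, eq_zero_of_lt R (Nat.lt_succ_self n), smul_zero, add_zero,
      sum_range_succ']
    simp
  rw [derivative_sum, mul_sum, ← sum_sub_distrib, sum_congr rfl fun ν _ => hterm ν,
    sum_add_distrib, hshift, ← sum_add_distrib]
  exact sum_congr rfl fun ν _ => by rw [← add_smul]; ring_nf

theorem eval_sum_smul_pos {n : ℕ} {c : ℕ → ℝ} (hc : ∀ ν ≤ n, 0 ≤ c ν) (hcn : 0 < c n)
    {x : ℝ} (hx0 : 0 < x) (hx1 : x ≤ 1) :
    0 < (∑ ν ∈ range (n + 1), c ν • bernsteinPolynomial ℝ n ν).eval x := by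
  have h1x : 0 ≤ 1 - x := by linarith
  rw [eval_finsetSum, sum_range_succ]
  refine add_pos_of_nonneg_of_pos (sum_nonneg fun ν hν => ?_) ?_
  · have := hc ν (mem_range.1 hν).le
    simp only [eval_smul, bernsteinPolynomial, eval_mul, eval_pow, eval_natCast, eval_sub,
      eval_one, eval_X, smul_eq_mul]
    positivity
  · simp only [bernsteinPolynomial, Nat.choose_self, Nat.cast_one, one_mul, tsub_self, pow_zero,
      mul_one, eval_smul, eval_pow, eval_X, smul_eq_mul]
    positivity

end bernsteinPolynomial

theorem ConcaveOn.apply_zero_le_natCast_mul_sub {f : ℝ → ℝ} (hf : ConcaveOn ℝ (Set.Ici 0) f)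
    (m : ℕ) : f 0 ≤ m * f (m - 1 : ℕ) - (m - 1) * f m := by
  rcases m with _ | k
  · simp
  have hk : (0 : ℝ) < k + 1 := by positivity
  -- `k` is the convex combination `k/(k+1) • (k+1) + 1/(k+1) • 0`
  have h := hf.2 (Set.mem_Ici.2 hk.le) (Set.self_mem_Ici (a := (0 : ℝ)))
    (show (0 : ℝ) ≤ k / (k + 1) by positivity) (show (0 : ℝ) ≤ 1 / (k + 1) by positivity)
    (by field_simp)
  have hcomb : (k / (k + 1) : ℝ) • ((k : ℝ) + 1) + (1 / (k + 1) : ℝ) • (0 : ℝ) = k := by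
    rw [smul_zero, add_zero, smul_eq_mul, div_mul_cancel₀ _ hk.ne']
  rw [hcomb, smul_eq_mul, smul_eq_mul] at h
  push_cast
  simp only [add_sub_cancel_right]
  have := mul_le_mul_of_nonneg_left h hk.le
  field_simp at this
  linarith

theorem concaveOn_log_add {c : ℝ} (hc : 0 < c) :
    ConcaveOn ℝ (Set.Ici 0) fun t => log (t + c) :=
  (strictConcaveOn_log_Ioi.concaveOn.translate_left c).subset
    (fun t (ht : 0 ≤ t) => show 0 < c + t by linarith) (convex_Ici 0)

noncomputable def JtPoly (N : ℕ) (ω₀ : ℝ) : ℝ[X] :=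
  ∑ ν ∈ range (N + 1), log (ν + ω₀) • bernsteinPolynomial ℝ N ν

theorem Jt_succ_eq_eval (N : ℕ) (ω₀ vbar v : ℝ) :
    Jt (N + 1) ω₀ vbar v = (JtPoly N ω₀).eval (v / vbar) := by
  simp only [Jt, JtPoly, eval_finsetSum, eval_smul, bernsteinPolynomial, eval_mul, eval_pow,
    eval_natCast, eval_sub, eval_one, eval_X, smul_eq_mul, Nat.add_sub_cancel]
  exact sum_congr rfl fun ν _ => by ring

theorem hasDerivAt_Jt_succ (N : ℕ) (ω₀ vbar v : ℝ) :
    HasDerivAt (Jt (N + 1) ω₀ vbar) ((derivative (JtPoly N ω₀)).eval (v / vbar) / vbar) v := by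
  rw [funext (Jt_succ_eq_eval N ω₀ vbar)]
  exact (((JtPoly N ω₀).hasDerivAt (v / vbar)).comp v
    ((hasDerivAt_id v).div_const vbar)).congr_deriv (mul_one_div _ _)

theorem log_add_intercept_pos {ω₀ : ℝ} (hω : 1 < ω₀) (m : ℕ) :
    0 < m * log ((m - 1 : ℕ) + ω₀) - (m - 1) * log (m + ω₀) :=
  (log_pos hω).trans_le <| by
    simpa using (concaveOn_log_add (by linarith)).apply_zero_le_natCast_mul_sub m

/-- For every integer `n ≥ 2` and every `v ∈ (0, v̄]`: `J̃(v)/v > J̃'(v)`. -/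
theorem stmt12 (n : ℕ) (hn : 2 ≤ n) (ω₀ vbar : ℝ) (hω : 1 < ω₀) (hv : 0 < vbar) :
    ∀ v ∈ Set.Ioc (0 : ℝ) vbar, deriv (Jt n ω₀ vbar) v < Jt n ω₀ vbar v / v := by
  rintro v ⟨hv0, hvle⟩
  obtain ⟨N, rfl⟩ : ∃ N, n = N + 1 := ⟨n - 1, by omega⟩
  rw [(hasDerivAt_Jt_succ N ω₀ vbar v).deriv, Jt_succ_eq_eval, lt_div_iff₀ hv0, ← sub_pos]
  set x := v / vbar with hx
  have hintercept : (JtPoly N ω₀).eval x - (derivative (JtPoly N ω₀)).eval x / vbar * v =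
      (JtPoly N ω₀ - X * derivative (JtPoly N ω₀)).eval x := by
    rw [eval_sub, eval_mul, eval_X, hx]; ring
  rw [hintercept, JtPoly, bernsteinPolynomial.sum_smul_sub_X_mul_derivative]
  exact bernsteinPolynomial.eval_sum_smul_pos (fun ν _ => (log_add_intercept_pos hω ν).le)
    (log_add_intercept_pos hω N) (div_pos hv0 hv) ((div_le_one hv).2 hvle)
end

section
/- For all integers m ≥ 2 and all reals ω₀ > 1: (m+1)·ln(m+ω₀) − (m−2)·ln(m−3+ω₀) < 3·(m·ln(m−1+ω₀) − (m−1)·ln(m−2+ω₀)). -/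
open Real Set

/-! With `h t = (t - (ω₀ - 1)) * log t` and `a = m - 3 + ω₀ > 0`, the inequality says that the
third forward difference `h (a + 3) - 3 h (a + 2) + 3 h (a + 1) - h a` is negative. Since
`h'' t = 1 / t + (ω₀ - 1) / t ^ 2` is strictly decreasing on `t > 0`, the unit forward difference
of `h` has negative second derivative, so it is strictly concave, and the second difference of a
strictly concave function is negative. -/

section ForwardDifference

variable {f f' f'' : ℝ → ℝ} {a : ℝ}

theorem strictConcaveOn_Ioi_of_hasDerivAt2_neg
    (hf : ∀ x ∈ Ioi a, HasDerivAt f (f' x) x) (hf' : ∀ x ∈ Ioi a, HasDerivAt f' (f'' x) x)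
    (hneg : ∀ x ∈ Ioi a, f'' x < 0) : StrictConcaveOn ℝ (Ioi a) f := by
  refine StrictAntiOn.strictConcaveOn_of_deriv (convex_Ioi a)
    (fun x hx => (hf x hx).continuousAt.continuousWithinAt) ?_
  rw [interior_Ioi]
  have hanti : StrictAntiOn f' (Ioi a) :=
    strictAntiOn_of_hasDerivWithinAt_neg (convex_Ioi a)
      (fun x hx => (hf' x hx).continuousAt.continuousWithinAt)
      (fun x hx => (hf' x (interior_subset hx)).hasDerivWithinAt)
      (fun x hx => hneg x (interior_subset hx))
  exact hanti.congr fun x hx => (hf x hx).deriv.symm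

theorem strictConcaveOn_fwdDiff_of_strictAntiOn
    (hf : ∀ x ∈ Ioi a, HasDerivAt f (f' x) x) (hf' : ∀ x ∈ Ioi a, HasDerivAt f' (f'' x) x)
    (hf'' : StrictAntiOn f'' (Ioi a)) :
    StrictConcaveOn ℝ (Ioi a) (fwdDiff 1 f) := by
  have hshift : ∀ x ∈ Ioi a, x + 1 ∈ Ioi a := fun x hx => by
    simp only [mem_Ioi] at hx ⊢; linarith
  refine strictConcaveOn_Ioi_of_hasDerivAt2_neg (f' := fun x => f' (x + 1) - f' x)
    (f'' := fun x => f'' (x + 1) - f'' x) (fun x hx => ?_) (fun x hx => ?_) (fun x hx => ?_)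
  · exact ((hf _ (hshift x hx)).comp_add_const x 1).sub (hf x hx)
  · exact ((hf' _ (hshift x hx)).comp_add_const x 1).sub (hf' x hx)
  · exact sub_neg.2 (hf'' hx (hshift x hx) (lt_add_one x))

theorem third_fwdDiff_neg_of_strictAntiOn
    (hf : ∀ x ∈ Ioi a, HasDerivAt f (f' x) x) (hf' : ∀ x ∈ Ioi a, HasDerivAt f' (f'' x) x)
    (hf'' : StrictAntiOn f'' (Ioi a)) {x : ℝ} (hx : a < x) :
    f (x + 3) - 3 * f (x + 2) + 3 * f (x + 1) - f x < 0 := by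
  have key := (strictConcaveOn_fwdDiff_of_strictAntiOn hf hf' hf'').2
    (show x ∈ Ioi a from hx) (show x + 2 ∈ Ioi a by simp only [mem_Ioi]; linarith)
    (by linarith : x ≠ x + 2) one_half_pos one_half_pos (add_halves 1)
  have hmid : (1 / 2 : ℝ) • x + (1 / 2 : ℝ) • (x + 2) = x + 1 := by
    simp only [smul_eq_mul]; ring
  rw [hmid, smul_eq_mul, smul_eq_mul] at key
  simp only [fwdDiff, show x + 2 + 1 = x + 3 by ring, show x + 1 + 1 = x + 2 by ring] at key
  linarith

end ForwardDifference

theorem hasDerivAt_sub_mul_log (c : ℝ) {t : ℝ} (ht : 0 < t) :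
    HasDerivAt (fun t => (t - c) * log t) (log t + (t - c) / t) t :=
  (((hasDerivAt_id' t).sub_const c).mul (hasDerivAt_log ht.ne')).congr_deriv (by ring)

theorem hasDerivAt_log_add_sub_div (c : ℝ) {t : ℝ} (ht : 0 < t) :
    HasDerivAt (fun t => log t + (t - c) / t) (t⁻¹ + c / t ^ 2) t :=
  ((hasDerivAt_log ht.ne').add (((hasDerivAt_id' t).sub_const c).div (hasDerivAt_id' t)
    ht.ne')).congr_deriv (by ring)

theorem strictAntiOn_inv_add_div_sq {c : ℝ} (hc : 0 ≤ c) :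
    StrictAntiOn (fun t : ℝ => t⁻¹ + c / t ^ 2) (Ioi 0) := by
  intro s hs t ht hst
  simp only [mem_Ioi] at hs ht
  have hsq : c / t ^ 2 ≤ c / s ^ 2 := by gcongr
  have hinv : t⁻¹ < s⁻¹ := by gcongr
  linarith

/-- For all integers `m ≥ 2` and all reals `ω₀ > 1`:
`(m+1)·ln(m+ω₀) − (m−2)·ln(m−3+ω₀) < 3·(m·ln(m−1+ω₀) − (m−1)·ln(m−2+ω₀))`. -/
theorem stmt14 (m : ℕ) (hm : 2 ≤ m) (ω₀ : ℝ) (hω : 1 < ω₀) :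
    ((m : ℝ) + 1) * Real.log ((m : ℝ) + ω₀) -
      ((m : ℝ) - 2) * Real.log ((m : ℝ) - 3 + ω₀) <
    3 * ((m : ℝ) * Real.log ((m : ℝ) - 1 + ω₀) -
      ((m : ℝ) - 1) * Real.log ((m : ℝ) - 2 + ω₀)) := by
  have hm' : (2 : ℝ) ≤ m := by exact_mod_cast hm
  have key := third_fwdDiff_neg_of_strictAntiOn (a := 0)
    (fun t ht => hasDerivAt_sub_mul_log (ω₀ - 1) ht)
    (fun t ht => hasDerivAt_log_add_sub_div (ω₀ - 1) ht)
    (strictAntiOn_inv_add_div_sq (by linarith)) (x := m - 3 + ω₀) (by linarith)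
  rw [show (m : ℝ) - 3 + ω₀ + 3 = m + ω₀ by ring, show (m : ℝ) - 3 + ω₀ + 2 = m - 1 + ω₀ by ring,
    show (m : ℝ) - 3 + ω₀ + 1 = m - 2 + ω₀ by ring] at key
  linarith
end

section
/- Let v̄ > 0, δ ∈ (0,1), and let F : [0, v̄] → ℝ be twice continuously differentiable with F(0) = 0, F(v̄) = 1, density f = F' satisfying f(v) > 0 and f'(v) ≤ 0 for all v ∈ [0, v̄] (so F is concave), and 2·f(p) + p·f'(p) ≥ 0 for all p ∈ [0, v̄] (so p ↦ p(1−F(p)) is concave). Then h(v) = 1 − F(v) − (1−δ)·v·f(v) is strictly decreasing on [0, v̄], h(0) = 1 > 0, h(v̄) = −(1−δ)·v̄·f(v̄) < 0, and hence h has a unique zero v̌ ∈ (0, v̄). -/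
open Real Set

/-!
With `c = 1 - δ`, the derivative of `h v = 1 - F v - c v f v` is `-f - c (f + v f')`.
The concavity condition gives `f + v f' ≥ -f`, so this derivative is at most `-δ f < 0`,
and `h` is strictly decreasing. Since `h 0 = 1` and `h v̄ = -c v̄ f v̄ < 0`, the
intermediate value theorem yields a zero in `(0, v̄)`, unique by strict monotonicity.
-/

section

variable {F f f' : ℝ → ℝ} {c : ℝ}

lemma hasDerivAt_one_sub_sub_mul_mul {v : ℝ} (hF : HasDerivAt F (f v) v)
    (hf : HasDerivAt f (f' v) v) :
    HasDerivAt (fun v => 1 - F v - c * v * f v) (-f v - c * (f v + v * f' v)) v := by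
  have hmul : HasDerivAt (fun v => c * v * f v) (c * 1 * f v + c * v * f' v) v :=
    (hasDerivAt_id' (x := v) |>.const_mul c).mul hf
  exact ((hF.const_sub 1).sub hmul).congr_deriv (by ring)

lemma strictAntiOn_one_sub_sub_mul_mul {s : Set ℝ} (hs : Convex ℝ s) (hc0 : 0 ≤ c) (hc1 : c < 1)
    (hF : ∀ v ∈ s, HasDerivAt F (f v) v) (hf : ∀ v ∈ s, HasDerivAt f (f' v) v)
    (hfpos : ∀ v ∈ s, 0 < f v) (hconc : ∀ v ∈ s, 0 ≤ 2 * f v + v * f' v) :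
    StrictAntiOn (fun v => 1 - F v - c * v * f v) s := by
  have hderiv v (hv : v ∈ s) := hasDerivAt_one_sub_sub_mul_mul (c := c) (hF v hv) (hf v hv)
  refine strictAntiOn_of_hasDerivWithinAt_neg hs
    (fun v hv => (hderiv v hv).continuousAt.continuousWithinAt)
    (fun v hv => (hderiv v (interior_subset hv)).hasDerivWithinAt) fun v hv => ?_
  have hv := interior_subset hv
  linarith [mul_nonneg hc0 (hconc v hv), mul_pos (sub_pos.2 hc1) (hfpos v hv)]

end

lemma StrictAntiOn.existsUnique_mem_Ioo_eq_zero {g : ℝ → ℝ} {a b : ℝ} (hab : a ≤ b)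
    (hg : StrictAntiOn g (Icc a b)) (hcont : ContinuousOn g (Icc a b))
    (ha : 0 < g a) (hb : g b < 0) : ∃! x, x ∈ Ioo a b ∧ g x = 0 := by
  obtain ⟨x, hx, hgx⟩ := intermediate_value_Ioo' hab hcont ⟨hb, ha⟩
  refine ⟨x, ⟨hx, hgx⟩, fun y ⟨hy, hgy⟩ => ?_⟩
  exact hg.injOn (Ioo_subset_Icc_self hy) (Ioo_subset_Icc_self hx) (hgy.trans hgx.symm)

theorem stmt18_general (vbar δ : ℝ) (hv : 0 < vbar) (hδ : δ ∈ Set.Ioo (0 : ℝ) 1)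
    (F f f' : ℝ → ℝ)
    (hF0 : F 0 = 0) (hF1 : F vbar = 1)
    (hF : ∀ v ∈ Set.Icc (0 : ℝ) vbar, HasDerivAt F (f v) v)
    (hf : ∀ v ∈ Set.Icc (0 : ℝ) vbar, HasDerivAt f (f' v) v)
    (hfpos : ∀ v ∈ Set.Icc (0 : ℝ) vbar, 0 < f v)
    (hconc : ∀ p ∈ Set.Icc (0 : ℝ) vbar, 0 ≤ 2 * f p + p * f' p) :
    StrictAntiOn (fun v => 1 - F v - (1 - δ) * v * f v) (Set.Icc 0 vbar) ∧
    1 - F 0 - (1 - δ) * 0 * f 0 = 1 ∧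
    1 - F vbar - (1 - δ) * vbar * f vbar = -((1 - δ) * vbar * f vbar) ∧
    1 - F vbar - (1 - δ) * vbar * f vbar < 0 ∧
    ∃! v, v ∈ Set.Ioo (0 : ℝ) vbar ∧ 1 - F v - (1 - δ) * v * f v = 0 := by
  obtain ⟨hδ0, hδ1⟩ := hδ
  have hanti := strictAntiOn_one_sub_sub_mul_mul (c := 1 - δ) (convex_Icc 0 vbar)
    (by linarith) (by linarith) hF hf hfpos hconc
  have hcont : ContinuousOn (fun v => 1 - F v - (1 - δ) * v * f v) (Icc 0 vbar) := fun v hv =>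
    (hasDerivAt_one_sub_sub_mul_mul (hF v hv) (hf v hv)).continuousAt.continuousWithinAt
  have h0 : 1 - F 0 - (1 - δ) * 0 * f 0 = 1 := by simp [hF0]
  have hvbar : 1 - F vbar - (1 - δ) * vbar * f vbar = -((1 - δ) * vbar * f vbar) := by
    simp [hF1]
  have hvbar_neg : 1 - F vbar - (1 - δ) * vbar * f vbar < 0 := by
    rw [hvbar, neg_lt_zero]
    exact mul_pos (mul_pos (by linarith) hv) (hfpos vbar (right_mem_Icc.2 hv.le))
  refine ⟨hanti, h0, hvbar, hvbar_neg, ?_⟩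
  exact hanti.existsUnique_mem_Ioo_eq_zero hv.le hcont (by rw [h0]; exact one_pos) hvbar_neg

/-- For a twice continuously differentiable CDF `F` on `[0, v̄]` with positive
non-increasing density `f = F'` (so `F` is concave) such that `p ↦ p(1−F(p))`
is concave (i.e. `2f(p) + p·f'(p) ≥ 0`), the function
`h(v) = 1 − F(v) − (1−δ)·v·f(v)` is strictly decreasing on `[0, v̄]`, satisfies
`h(0) = 1 > 0` and `h(v̄) = −(1−δ)·v̄·f(v̄) < 0`, and has a unique zero in `(0, v̄)`. -/
theorem stmt18 (vbar δ : ℝ) (hv : 0 < vbar) (hδ : δ ∈ Set.Ioo (0 : ℝ) 1)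
    (F f f' : ℝ → ℝ)
    (hF0 : F 0 = 0) (hF1 : F vbar = 1)
    (hF : ∀ v ∈ Set.Icc (0 : ℝ) vbar, HasDerivAt F (f v) v)
    (hf : ∀ v ∈ Set.Icc (0 : ℝ) vbar, HasDerivAt f (f' v) v)
    (hf'c : ContinuousOn f' (Set.Icc 0 vbar))
    (hfpos : ∀ v ∈ Set.Icc (0 : ℝ) vbar, 0 < f v)
    (hf'le : ∀ v ∈ Set.Icc (0 : ℝ) vbar, f' v ≤ 0)
    (hconc : ∀ p ∈ Set.Icc (0 : ℝ) vbar, 0 ≤ 2 * f p + p * f' p) :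
    StrictAntiOn (fun v => 1 - F v - (1 - δ) * v * f v) (Set.Icc 0 vbar) ∧
    1 - F 0 - (1 - δ) * 0 * f 0 = 1 ∧
    1 - F vbar - (1 - δ) * vbar * f vbar = -((1 - δ) * vbar * f vbar) ∧
    1 - F vbar - (1 - δ) * vbar * f vbar < 0 ∧
    ∃! v, v ∈ Set.Ioo (0 : ℝ) vbar ∧ 1 - F v - (1 - δ) * v * f v = 0 :=
  stmt18_general vbar δ hv hδ F f f' hF0 hF1 hF hf hfpos hconc
end
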